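/- arXiv:2511.22945 — 5 statements merged into one kernel-verified Lean document; each statement's English description precedes it below -/
import Mathlib

section
/- Let S' be a compact left-topological semigroup and S ≤ S' a closed subsemigroup. If there is exactly one minimal left ideal I of S' that intersects S, then I ∩ S is the unique minimal left ideal of S. -/
/-- A left ideal of the subsemigroup (carried by the set) `T`. -/
def IsLeftIdealIn {M : Type*} [Mul M] (T J : Set M) : Prop :=
  J.Nonempty ∧ J ⊆ T ∧ ∀ t ∈ T, ∀ j ∈ J, t * j ∈ J

/-- A minimal left ideal of the subsemigroup carried by `T`. -/
def IsMinLeftIdealIn {M : Type*} [Mul M] (T J : Set M) : Prop :=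
  IsLeftIdealIn T J ∧ ∀ J' : Set M, IsLeftIdealIn T J' → J' ⊆ J → J' = J

/-- Purely algebraic: if `I` is a minimal left ideal of `M`, so is `I * e`. -/
lemma min_mul_right {M : Type*} [Semigroup M] {I : Set M}
    (hI : IsMinLeftIdealIn Set.univ I) (e : M) :
    IsMinLeftIdealIn Set.univ ((fun x => x * e) '' I) := by
  obtain ⟨⟨⟨a, haI⟩, -, habs⟩, hmin⟩ := hI
  constructor
  · refine ⟨⟨a * e, a, haI, rfl⟩, Set.subset_univ _, ?_⟩
    rintro t - j ⟨y, hyI, rfl⟩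
    exact ⟨t * y, habs t trivial y hyI, by simp [mul_assoc]⟩
  · rintro J ⟨⟨j, hjJ⟩, -, hJabs⟩ hJsub
    have hP : IsLeftIdealIn Set.univ {y ∈ I | y * e ∈ J} := by
      refine ⟨?_, Set.subset_univ _, ?_⟩
      · obtain ⟨y, hyI, hye⟩ := hJsub hjJ
        exact ⟨y, hyI, by rw [show y * e = j from hye]; exact hjJ⟩
      · rintro t - y ⟨hyI, hyeJ⟩
        refine ⟨habs t trivial y hyI, ?_⟩
        rw [mul_assoc]
        exact hJabs t trivial _ hyeJ
    have hPI : {y ∈ I | y * e ∈ J} = I := hmin _ hP (Set.sep_subset _ _)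
    apply Set.Subset.antisymm hJsub
    rintro x ⟨y, hyI, rfl⟩
    have hy' : y ∈ {y ∈ I | y * e ∈ J} := by rw [hPI]; exact hyI
    exact hy'.2

/-- Every left ideal of a closed subsemigroup `S` of a compact left-topological
semigroup contains a minimal left ideal. -/
lemma exists_min_left_ideal {M : Type*} [Semigroup M] [TopologicalSpace M] [CompactSpace M]
    [T2Space M] (hc : ∀ a : M, Continuous fun x : M => x * a)
    {S : Set M} (hS : ∀ a ∈ S, ∀ b ∈ S, a * b ∈ S) (hSc : IsClosed S)
    {J : Set M} (hJ : IsLeftIdealIn S J) :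
    ∃ L, IsMinLeftIdealIn S L ∧ L ⊆ J := by
  obtain ⟨⟨x, hxJ⟩, hJS, hJabs⟩ := hJ
  have hScomp : IsCompact S := hSc.isCompact
  -- closed left ideals of S of the form S*y are closed
  have hSyClosed : ∀ y : M, IsClosed ((fun s => s * y) '' S) := fun y =>
    (hScomp.image (hc y)).isClosed
  have hSyIdeal : ∀ y ∈ S, IsLeftIdealIn S ((fun s => s * y) '' S) := by
    intro y hy
    refine ⟨⟨x * y, x, hJS hxJ, rfl⟩, ?_, ?_⟩
    · rintro z ⟨s, hs, rfl⟩; exact hS s hs y hy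
    · rintro t ht z ⟨s, hs, rfl⟩
      exact ⟨t * s, hS t ht s hs, by simp [mul_assoc]⟩
  -- Zorn on closed left ideals contained in J
  set 𝒞 : Set (Set M) := {C | IsClosed C ∧ C ⊆ J ∧ IsLeftIdealIn S C} with h𝒞
  have hSx : ((fun s => s * x) '' S) ∈ 𝒞 := by
    refine ⟨hSyClosed x, ?_, hSyIdeal x (hJS hxJ)⟩
    rintro z ⟨s, hs, rfl⟩; exact hJabs s hs x hxJ
  have hzorn : ∀ c ⊆ 𝒞, IsChain (· ⊆ ·) c → c.Nonempty → ∃ lb ∈ 𝒞, ∀ s ∈ c, lb ⊆ s := by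
    rintro c hc𝒞 hchain ⟨C₀, hC₀⟩
    refine ⟨⋂₀ c, ⟨?_, ?_, ?_, ?_, ?_⟩, fun s hs => Set.sInter_subset_of_mem hs⟩
    · exact isClosed_sInter fun C hC => (hc𝒞 hC).1
    · exact (Set.sInter_subset_of_mem hC₀).trans (hc𝒞 hC₀).2.1
    · -- nonempty via compactness
      have hdir : DirectedOn (· ⊇ ·) c := fun a ha b hb =>
        (hchain.total ha hb).elim (fun h => ⟨a, ha, Set.Subset.rfl, h⟩)
          (fun h => ⟨b, hb, h, Set.Subset.rfl⟩)
      haveI : Nonempty c := ⟨⟨C₀, hC₀⟩⟩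
      have : (⋂ C : c, (C : Set M)).Nonempty := by
        apply IsCompact.nonempty_iInter_of_directed_nonempty_isCompact_isClosed
        · rintro ⟨C₁, hC₁⟩ ⟨C₂, hC₂⟩
          obtain ⟨C₃, hC₃, h₁, h₂⟩ := hdir C₁ hC₁ C₂ hC₂
          exact ⟨⟨C₃, hC₃⟩, h₁, h₂⟩
        · exact fun ⟨C, hC⟩ => (hc𝒞 hC).2.2.1
        · exact fun ⟨C, hC⟩ => (hc𝒞 hC).1.isCompact
        · exact fun ⟨C, hC⟩ => (hc𝒞 hC).1
      rwa [Set.sInter_eq_iInter]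
    · exact fun z hz => (hc𝒞 hC₀).2.2.2.1 (Set.sInter_subset_of_mem hC₀ hz)
    · intro t ht j hj
      exact Set.mem_sInter.mpr fun C hC =>
        (hc𝒞 hC).2.2.2.2 t ht j (Set.mem_sInter.mp hj C hC)
  obtain ⟨L, hLsub, hLmem, hLmin⟩ :=
    zorn_superset_nonempty 𝒞 hzorn ((fun s => s * x) '' S) hSx
  · obtain ⟨hLc, hLJ, hLideal⟩ := hLmem
    refine ⟨L, ⟨hLideal, ?_⟩, hLJ⟩
    rintro J' hJ' hJ'L
    obtain ⟨⟨y, hyJ'⟩, hJ'S, hJ'abs⟩ := hJ'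
    have hSy : ((fun s => s * y) '' S) ∈ 𝒞 := by
      refine ⟨hSyClosed y, fun z hz => hLJ (?_), hSyIdeal y (hJ'S hyJ')⟩
      · obtain ⟨s, hs, rfl⟩ := hz
        exact hJ'L (hJ'abs s hs y hyJ')
    have hSyL : ((fun s => s * y) '' S) ⊆ L := by
      rintro z ⟨s, hs, rfl⟩; exact hJ'L (hJ'abs s hs y hyJ')
    have : ((fun s => s * y) '' S) = L := Set.Subset.antisymm hSyL (hLmin hSy hSyL)
    apply Set.Subset.antisymm hJ'L
    rw [← this]
    rintro z ⟨s, hs, rfl⟩; exact hJ'abs s hs y hyJ'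

/-- Let `M` be a compact (Hausdorff) left-topological semigroup and `S`
a closed subsemigroup. If there is exactly one minimal left ideal `I` of `M` that
intersects `S`, then `I ∩ S` is the unique minimal left ideal of `S`. -/
theorem stmt2 {M : Type*} [Semigroup M] [TopologicalSpace M] [CompactSpace M] [T2Space M]
    (hc : ∀ a : M, Continuous fun x : M => x * a)
    (S I : Set M)
    (hS : ∀ a ∈ S, ∀ b ∈ S, a * b ∈ S) (hSc : IsClosed S)
    (hI : IsMinLeftIdealIn Set.univ I) (hmeet : (I ∩ S).Nonempty)
    (huniq : ∀ I' : Set M, IsMinLeftIdealIn Set.univ I' → (I' ∩ S).Nonempty → I' = I) :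
    IsMinLeftIdealIn S (I ∩ S) ∧ ∀ J : Set M, IsMinLeftIdealIn S J → J = I ∩ S := by
  obtain ⟨a, haI, haS⟩ := hmeet
  obtain ⟨⟨hInem, -, hIabs⟩, hImin⟩ := hI
  -- I ∩ S is a left ideal of S
  have hIS : IsLeftIdealIn S (I ∩ S) :=
    ⟨⟨a, haI, haS⟩, Set.inter_subset_right, fun t ht j hj =>
      ⟨hIabs t trivial j hj.1, hS t ht j hj.2⟩⟩
  -- KEY: every minimal left ideal of S equals I ∩ S
  have key : ∀ L : Set M, IsMinLeftIdealIn S L → L = I ∩ S := by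
    intro L ⟨⟨⟨x, hxL⟩, hLS, hLabs⟩, hLmin⟩
    -- L is closed: L = S * x
    have hSx : IsLeftIdealIn S ((fun s => s * x) '' S) := by
      refine ⟨⟨x * x, x, hLS hxL, rfl⟩, ?_, ?_⟩
      · rintro z ⟨s, hs, rfl⟩; exact hS s hs x (hLS hxL)
      · rintro t ht z ⟨s, hs, rfl⟩
        exact ⟨t * s, hS t ht s hs, by simp [mul_assoc]⟩
    have hSxL : ((fun s => s * x) '' S) ⊆ L := by
      rintro z ⟨s, hs, rfl⟩; exact hLabs s hs x hxL
    have hLeq : ((fun s => s * x) '' S) = L := hLmin _ hSx hSxL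
    have hLcomp : IsCompact L := hLeq ▸ hSc.isCompact.image (hc x)
    -- idempotent in L
    obtain ⟨e, heL, hee⟩ := exists_idempotent_in_compact_subsemigroup hc L ⟨x, hxL⟩ hLcomp
      (fun p hp q hq => hLabs p (hLS hp) q hq)
    -- I * e is a minimal left ideal of M meeting S, hence = I
    have hIe := min_mul_right ⟨⟨hInem, Set.subset_univ _, hIabs⟩, hImin⟩ e
    have hIeI : ((fun y => y * e) '' I) = I :=
      huniq _ hIe ⟨a * e, ⟨a, haI, rfl⟩, hS a haS e (hLS heL)⟩
    -- c := a * e lies in L ∩ I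
    have hcI : a * e ∈ I := hIeI ▸ ⟨a, haI, rfl⟩
    have hcL : a * e ∈ L := hLabs a haS e heL
    -- L ⊆ I : L = S * (a*e) ⊆ I
    have hScL : IsLeftIdealIn S ((fun s => s * (a * e)) '' S) := by
      refine ⟨⟨a * (a * e), a, haS, rfl⟩, ?_, ?_⟩
      · rintro z ⟨s, hs, rfl⟩; exact hS s hs _ (hLS hcL)
      · rintro t ht z ⟨s, hs, rfl⟩
        exact ⟨t * s, hS t ht s hs, by simp [mul_assoc]⟩
    have hScsub : ((fun s => s * (a * e)) '' S) ⊆ L := by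
      rintro z ⟨s, hs, rfl⟩; exact hLabs s hs _ hcL
    have hLI : L ⊆ I := by
      rw [← hLmin _ hScL hScsub]
      rintro z ⟨s, hs, rfl⟩
      exact hIabs s trivial _ hcI
    -- M * e = I, so every x ∈ I satisfies x * e = x
    have heI : e ∈ I := hLI heL
    have hMe : IsLeftIdealIn Set.univ ((fun y => y * e) '' Set.univ) := by
      refine ⟨⟨e * e, e, trivial, rfl⟩, Set.subset_univ _, ?_⟩
      rintro t - z ⟨y, -, rfl⟩
      exact ⟨t * y, trivial, by simp [mul_assoc]⟩
    have hMeI : ((fun y => y * e) '' Set.univ) = I := by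
      apply hImin _ hMe
      rintro z ⟨y, -, rfl⟩
      exact hIabs y trivial e heI
    -- conclude
    refine Set.Subset.antisymm (fun z hz => ⟨hLI hz, hLS hz⟩) ?_
    rintro z ⟨hzI, hzS⟩
    have hz' : z ∈ (fun y => y * e) '' Set.univ := by rw [hMeI]; exact hzI
    obtain ⟨y, -, rfl⟩ := hz'
    have : y * e * e ∈ L := hLabs _ hzS e heL
    rwa [mul_assoc, hee] at this
  constructor
  · refine ⟨hIS, ?_⟩
    intro J' hJ' hJ'sub
    obtain ⟨L, hLmin, hLsub⟩ := exists_min_left_ideal hc hS hSc hJ'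
    have := key L hLmin
    exact Set.Subset.antisymm hJ'sub (this ▸ hLsub)
  · exact key
end

section
/- Let S' be a compact left-topological semigroup and S ≤ S' a closed subsemigroup intersecting the minimal ideal of S'. Then every maximal subgroup of the minimal ideal of S (an Ellis group of S) is a subgroup of a maximal subgroup of the minimal ideal of S' (an Ellis group of S'). -/
/-- A two-sided ideal of the subsemigroup (carried by the set) `T`. -/
def IsIdealIn {M : Type*} [Mul M] (T J : Set M) : Prop :=
  J.Nonempty ∧ J ⊆ T ∧ ∀ t ∈ T, ∀ j ∈ J, t * j ∈ J ∧ j * t ∈ J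

/-- A subgroup (as a subset) of the set `T` in a semigroup. -/
def IsSubgroupIn {M : Type*} [Mul M] (T G : Set M) : Prop :=
  G ⊆ T ∧ G.Nonempty ∧ (∀ a ∈ G, ∀ b ∈ G, a * b ∈ G) ∧
    ∃ e ∈ G, (∀ g ∈ G, e * g = g ∧ g * e = g) ∧ ∀ g ∈ G, ∃ h ∈ G, g * h = e ∧ h * g = e

/-- A maximal subgroup of the set `T` in a semigroup (an Ellis group when `T`
is the minimal ideal). -/
def IsMaxSubgroupIn {M : Type*} [Mul M] (T G : Set M) : Prop :=
  IsSubgroupIn T G ∧ ∀ G' : Set M, IsSubgroupIn T G' → G ⊆ G' → G' = G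

/-- Let `M` be a compact left-topological semigroup and `S` a closed
subsemigroup intersecting the minimal ideal `K'` of `M`. Then every maximal subgroup
of the minimal ideal `K` of `S` (an Ellis group of `S`) is contained in (a subgroup of)
some maximal subgroup of `K'` (an Ellis group of `M`). -/
theorem stmt4 {M : Type*} [Semigroup M] [TopologicalSpace M] [CompactSpace M] [T2Space M]
    (hc : ∀ a : M, Continuous fun x : M => x * a)
    (S K K' : Set M)
    (hS : ∀ a ∈ S, ∀ b ∈ S, a * b ∈ S) (hSc : IsClosed S)
    (hK' : IsIdealIn Set.univ K') (hK'min : ∀ J : Set M, IsIdealIn Set.univ J → K' ⊆ J)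
    (hmeet : (S ∩ K').Nonempty)
    (hK : IsIdealIn S K) (hKmin : ∀ J : Set M, IsIdealIn S J → K ⊆ J) :
    ∀ G : Set M, IsMaxSubgroupIn K G → ∃ G' : Set M, IsMaxSubgroupIn K' G' ∧ G ⊆ G' := by

  intro G hG
  obtain ⟨⟨hGK, hGne, hGmul, e, heG, hid, hinv⟩, hGmax⟩ := hG
  -- K ⊆ K'
  have hKK' : K ⊆ K' := by
    have : K ⊆ S ∩ K' := by
      apply hKmin
      refine ⟨hmeet, Set.inter_subset_left, ?_⟩
      intro t ht j hj
      exact ⟨⟨hS t ht j hj.1, (hK'.2.2 t trivial j hj.2).1⟩,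
             ⟨hS j hj.1 t ht, (hK'.2.2 t trivial j hj.2).2⟩⟩
    exact fun x hx => (this hx).2
  have heK' : e ∈ K' := hKK' (hGK heG)
  have hee : e * e = e := (hid e heG).1
  set G' : Set M := {g | g ∈ K' ∧ e * g = g ∧ g * e = g ∧
      ∃ h, h ∈ K' ∧ e * h = h ∧ h * e = h ∧ g * h = e ∧ h * g = e} with hG'def
  have hGG' : G ⊆ G' := by
    intro g hg
    obtain ⟨h, hhG, hgh, hhg⟩ := hinv g hg
    exact ⟨hKK' (hGK hg), (hid g hg).1, (hid g hg).2,
      h, hKK' (hGK hhG), (hid h hhG).1, (hid h hhG).2, hgh, hhg⟩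
  have heG' : e ∈ G' := hGG' heG
  have hsub : IsSubgroupIn K' G' := by
    refine ⟨fun g hg => hg.1, ⟨e, heG'⟩, ?_, e, heG', ?_, ?_⟩
    · rintro a ⟨haK, hea, hae, ha, haK', heha, hhae, haha, hhaa⟩
        b ⟨hbK, heb, hbe, hb, hbK', hehb, hhbe, hbhb, hhbb⟩
      refine ⟨(hK'.2.2 a trivial b hbK).1, by rw [← mul_assoc, hea],
        by rw [mul_assoc, hbe], hb * ha, (hK'.2.2 hb trivial ha haK').1,
        by rw [← mul_assoc, hehb], by rw [mul_assoc, hhae], ?_, ?_⟩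
      · calc a * b * (hb * ha) = a * (b * hb) * ha := by simp [mul_assoc]
          _ = a * ha := by rw [hbhb, mul_assoc, heha]
          _ = e := haha
      · calc hb * ha * (a * b) = hb * (ha * a) * b := by simp [mul_assoc]
          _ = hb * b := by rw [hhaa, mul_assoc, heb]
          _ = e := hhbb
    · rintro g ⟨hgK, heg, hge, _⟩
      exact ⟨heg, hge⟩
    · rintro g ⟨hgK, heg, hge, h, hhK, heh, hhe, hgh, hhg⟩
      exact ⟨h, ⟨hhK, heh, hhe, g, hgK, heg, hge, hhg, hgh⟩, hgh, hhg⟩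
  refine ⟨G', ⟨hsub, ?_⟩, hGG'⟩
  intro G'' hsub'' hss
  obtain ⟨hG''K, _, hmul'', e', he'G'', hid'', hinv''⟩ := hsub''
  have heG'' : e ∈ G'' := hss heG'
  have he'e : e' = e := by
    obtain ⟨h, hhG'', heh, hhe⟩ := hinv'' e heG''
    have : e * h = e * e' := by
      conv_lhs => rw [← hee]
      rw [mul_assoc, heh]
    rw [← heh, this, (hid'' e heG'').2]
  apply Set.Subset.antisymm _ hss
  intro g hg
  obtain ⟨h, hhG'', hgh, hhg⟩ := hinv'' g hg
  rw [he'e] at hgh hhg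
  have hidg := hid'' g hg
  have hidh := hid'' h hhG''
  rw [he'e] at hidg hidh
  exact ⟨hG''K hg, hidg.1, hidg.2, h, hG''K hhG'', hidh.1, hidh.2, hgh, hhg⟩
end

section
/- (VC theorem / uniform law of large numbers) Let (X, μ) be a probability space and F ⊆ P(X) a family of measurable sets of VC-dimension at most k satisfying the measurability conditions: for each n, the map (x_1,…,x_n) ↦ sup_{F∈F} |Av(x_1,…,x_n; F) − μ(F)| is measurable, and the analogous two-sample map is measurable. Then for every ε > 0 there is N (depending only on k and ε) such that there exist x_1,…,x_N ∈ X with |Av(x_1,…,x_N; F) − μ(F)| < ε for all F ∈ F simultaneously. -/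
/-!
Symmetrization with a ghost sample: if some `F` deviates by more than `ε / 2` on the sample
`x`, then by Hoeffding's inequality an independent sample `y` sees `F` within `ε / 4` of its
measure with probability at least `1 / 2`, so `x` and `y` disagree on `F` by more than `ε / 4`.
The law of `(x, y)` is invariant under exchanging `x i` and `y i` for any set of indices. For
fixed `(x, y)`, `𝓕` cuts out at most `(k + 1) (2N)^k` traces on the `2N` points (Sauer–Shelah),
and for each trace only a fraction `2 exp (-N ε² / 32)` of the `2^N` exchange patterns produces
a discrepancy above `ε / 4` (Hoeffding for random signs). Hence the bad event for `x` has
probability at most `4 (k + 1) (2N)^k exp (-N ε² / 32)`, which is `< 1` for large `N`.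
-/

open MeasureTheory

/-- A family of sets `𝓕` shatters a finite set `s`. -/
def Shatters {X : Type*} (𝓕 : Set (Set X)) (s : Finset X) : Prop :=
  ∀ t ⊆ s, ∃ F ∈ 𝓕, ∀ x ∈ s, (x ∈ F ↔ x ∈ t)

/-- `avgMem F x` is the fraction of the sample `x : Fin n → X` lying in `F`. -/
noncomputable def avgMem {X : Type*} (F : Set X) {n : ℕ} (x : Fin n → X) : ℝ :=
  (∑ i, F.indicator (fun _ => (1 : ℝ)) (x i)) / n

open Finset Real ProbabilityTheory
open scoped ENNReal

section Average

variable {X : Type*}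

lemma indicator_one_mem_Icc (F : Set X) (a : X) :
    F.indicator (fun _ => (1 : ℝ)) a ∈ Set.Icc 0 1 := by
  by_cases h : a ∈ F <;> simp [h]

lemma avgMem_nonneg (F : Set X) {n : ℕ} (x : Fin n → X) : 0 ≤ avgMem F x :=
  div_nonneg (sum_nonneg fun i _ => (indicator_one_mem_Icc F (x i)).1) n.cast_nonneg

lemma avgMem_le_one (F : Set X) {n : ℕ} (x : Fin n → X) : avgMem F x ≤ 1 := by
  rcases n.eq_zero_or_pos with rfl | hn
  · simp [avgMem]
  rw [avgMem, div_le_one (by positivity)]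
  calc ∑ i, F.indicator (fun _ => (1 : ℝ)) (x i) ≤ ∑ _i : Fin n, (1 : ℝ) :=
        sum_le_sum fun i _ => (indicator_one_mem_Icc F (x i)).2
    _ = n := by simp

lemma avgMem_sub_eq_sum_div {n : ℕ} (hn : 0 < n) (F : Set X) (x : Fin n → X) (p : ℝ) :
    avgMem F x - p = (∑ i, (F.indicator (fun _ => (1 : ℝ)) (x i) - p)) / n := by
  rw [avgMem, sum_sub_distrib, sum_const, card_univ, Fintype.card_fin, nsmul_eq_mul, sub_div,
    mul_div_cancel_left₀ _ (by positivity)]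

lemma abs_avgMem_sub_avgMem_le_one (F : Set X) {n : ℕ} (x y : Fin n → X) :
    |avgMem F x - avgMem F y| ≤ 1 :=
  abs_sub_le_iff.2 ⟨by linarith [avgMem_le_one F x, avgMem_nonneg F y],
    by linarith [avgMem_le_one F y, avgMem_nonneg F x]⟩

lemma abs_avgMem_sub_measure_le_one [MeasurableSpace X] (μ : Measure X) [IsProbabilityMeasure μ]
    (F : Set X) {n : ℕ} (x : Fin n → X) : |avgMem F x - μ.real F| ≤ 1 :=
  abs_sub_le_iff.2 ⟨by linarith [avgMem_le_one F x, measureReal_nonneg (μ := μ) (s := F)],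
    by linarith [avgMem_nonneg F x, measureReal_le_one (μ := μ) (s := F)]⟩

end Average

namespace Real

variable {ι : Type*} {P : ι → Prop} {f : ι → ℝ}

lemma le_biSup_of_forall_le {C : ℝ} (hf : ∀ i, f i ≤ C) {i : ι} (hi : P i) :
    f i ≤ ⨆ j, ⨆ (_ : P j), f j := by
  have hbdd : BddAbove (Set.range fun j => ⨆ (_ : P j), f j) :=
    ⟨max C 0, Set.forall_mem_range.2 fun j =>
      Real.iSup_le (fun _ => (hf j).trans (le_max_left _ _)) (le_max_right _ _)⟩
  exact (ciSup_pos hi).symm.le.trans (le_ciSup hbdd i)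

lemma exists_lt_of_lt_biSup {c : ℝ} (hc : 0 ≤ c) (h : c < ⨆ i, ⨆ (_ : P i), f i) :
    ∃ i, P i ∧ c < f i := by
  by_contra! hle
  exact h.not_ge (Real.iSup_le (fun i => Real.iSup_le (hle i) hc) hc)

end Real

section Hoeffding

variable {X : Type*} [MeasurableSpace X] (μ : Measure X) [IsProbabilityMeasure μ]

lemma measureReal_sum_indicator_sub_ge_le {F : Set X} (hF : MeasurableSet F) (n : ℕ)
    {t : ℝ} (ht : 0 ≤ t) :
    (Measure.pi fun _ : Fin n => μ).real
        {x | t ≤ ∑ i, (F.indicator (fun _ => (1 : ℝ)) (x i) - μ.real F)}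
      ≤ exp (-2 * t ^ 2 / n) := by
  have hmeas : Measurable (F.indicator fun _ => (1 : ℝ)) := measurable_const.indicator hF
  have hindep := iIndepFun_pi (μ := fun _ : Fin n => μ)
    (X := fun _ a => F.indicator (fun _ => (1 : ℝ)) a - μ.real F)
    fun _ => (hmeas.sub_const _).aemeasurable
  have hsubG : ∀ i ∈ (univ : Finset (Fin n)), HasSubgaussianMGF
      (fun x : Fin n → X => F.indicator (fun _ => (1 : ℝ)) (x i) - μ.real F)
      ((‖(1 : ℝ) - 0‖₊ / 2) ^ 2) (Measure.pi fun _ => μ) := by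
    intro i _
    have h := hasSubgaussianMGF_of_mem_Icc (μ := Measure.pi fun _ : Fin n => μ)
      (X := fun x => F.indicator (fun _ => (1 : ℝ)) (x i)) (a := 0) (b := 1)
      (hmeas.comp (measurable_pi_apply i)).aemeasurable
      (ae_of_all _ fun x => indicator_one_mem_Icc F (x i))
    rwa [integral_comp_eval hmeas.aestronglyMeasurable, integral_indicator_const _ hF,
      smul_eq_mul, mul_one] at h
  refine (HasSubgaussianMGF.measure_sum_ge_le_of_iIndepFun hindep hsubG ht).trans_eq ?_
  congr 1
  simp only [sub_zero, nnnorm_one, one_div, inv_pow, sum_const, card_univ, Fintype.card_fin,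
    nsmul_eq_mul, NNReal.coe_mul, NNReal.coe_natCast, NNReal.coe_inv, NNReal.coe_pow,
    NNReal.coe_ofNat, neg_mul]
  ring

end Hoeffding

def signOfBool (b : Bool) : ℝ := if b then -1 else 1

section SignCount

variable {n : ℕ}

lemma sum_exp_mul_signOfBool (c : ℝ) : ∑ b : Bool, exp (signOfBool b * c) = 2 * cosh c := by
  rw [Fintype.sum_bool, cosh_eq]
  simp only [signOfBool, if_true, Bool.false_eq_true, if_false, neg_one_mul, one_mul]
  ring

lemma card_filter_le_sum_signOfBool_mul_mul_exp_le (a : Fin n → ℝ) (ha : ∀ i, |a i| ≤ 1)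
    {s t : ℝ} (ht : 0 ≤ t) :
    (#{σ : Fin n → Bool | s ≤ ∑ i, signOfBool (σ i) * a i} : ℝ) * exp (t * s)
      ≤ 2 ^ n * exp (n * t ^ 2 / 2) := by
  have hcoord : ∀ i, ∑ b : Bool, exp (signOfBool b * (t * a i)) ≤ 2 * exp (t ^ 2 / 2) := by
    intro i
    rw [sum_exp_mul_signOfBool]
    have hsq : (t * a i) ^ 2 / 2 ≤ t ^ 2 / 2 := by
      rw [mul_pow, ← sq_abs (a i)]
      gcongr
      exact mul_le_of_le_one_right (sq_nonneg t) (pow_le_one₀ (abs_nonneg _) (ha i))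
    linarith [(cosh_le_exp_half_sq (t * a i)).trans (exp_le_exp.2 hsq)]
  calc (#{σ : Fin n → Bool | s ≤ ∑ i, signOfBool (σ i) * a i} : ℝ) * exp (t * s)
      = ∑ σ ∈ {σ : Fin n → Bool | s ≤ ∑ i, signOfBool (σ i) * a i}, exp (t * s) := by
        rw [sum_const, nsmul_eq_mul]
    _ ≤ ∑ σ ∈ {σ : Fin n → Bool | s ≤ ∑ i, signOfBool (σ i) * a i},
          exp (t * ∑ i, signOfBool (σ i) * a i) :=
        sum_le_sum fun σ hσ => exp_le_exp.2 (mul_le_mul_of_nonneg_left (mem_filter.1 hσ).2 ht)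
    _ ≤ ∑ σ : Fin n → Bool, exp (t * ∑ i, signOfBool (σ i) * a i) :=
        sum_le_sum_of_subset_of_nonneg (filter_subset _ _) fun _ _ _ => (exp_pos _).le
    _ = ∏ i, ∑ b : Bool, exp (signOfBool b * (t * a i)) := by
        rw [Fintype.prod_sum]
        refine sum_congr rfl fun σ _ => ?_
        rw [mul_sum, exp_sum]
        exact prod_congr rfl fun i _ => by ring_nf
    _ ≤ ∏ _i : Fin n, 2 * exp (t ^ 2 / 2) :=
        prod_le_prod (fun i _ => sum_nonneg fun _ _ => (exp_pos _).le) fun i _ => hcoord i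
    _ = 2 ^ n * exp (n * t ^ 2 / 2) := by
        rw [prod_const, card_univ, Fintype.card_fin, mul_pow, ← exp_nat_mul]
        ring_nf

lemma card_filter_le_sum_signOfBool_mul_le (hn : 0 < n) (a : Fin n → ℝ) (ha : ∀ i, |a i| ≤ 1)
    {s : ℝ} (hs : 0 ≤ s) :
    (#{σ : Fin n → Bool | s ≤ ∑ i, signOfBool (σ i) * a i} : ℝ)
      ≤ 2 ^ n * exp (-s ^ 2 / (2 * n)) := by
  have hnR : (0 : ℝ) < n := by exact_mod_cast hn
  have h := card_filter_le_sum_signOfBool_mul_mul_exp_le a ha (s := s) (div_nonneg hs hnR.le)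
  -- Chernoff's bound at the optimal parameter `t = s / n`
  have hexp : exp (n * (s / n) ^ 2 / 2) = exp (s / n * s) * exp (-s ^ 2 / (2 * n)) := by
    rw [← exp_add]
    congr 1
    field_simp
    ring
  rw [hexp, ← mul_assoc, mul_comm _ (exp _)] at h
  nlinarith [exp_pos (s / n * s)]

lemma card_filter_le_abs_sum_signOfBool_mul_le (hn : 0 < n) (a : Fin n → ℝ)
    (ha : ∀ i, |a i| ≤ 1) {s : ℝ} (hs : 0 ≤ s) :
    (#{σ : Fin n → Bool | s ≤ |∑ i, signOfBool (σ i) * a i|} : ℝ)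
      ≤ 2 ^ n * (2 * exp (-s ^ 2 / (2 * n))) := by
  have hsub : ({σ | s ≤ |∑ i, signOfBool (σ i) * a i|} : Finset (Fin n → Bool))
      ⊆ ({σ | s ≤ ∑ i, signOfBool (σ i) * a i} : Finset (Fin n → Bool))
        ∪ ({σ | s ≤ ∑ i, signOfBool (σ i) * (-a) i} : Finset (Fin n → Bool)) := by
    intro σ hσ
    simp only [mem_union, mem_filter_univ, Pi.neg_apply, mul_neg, sum_neg_distrib] at hσ ⊢
    exact (le_abs.1 hσ).imp id fun h => by linarith
  have hcard := (card_le_card hsub).trans (card_union_le _ _)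
  have h₁ := card_filter_le_sum_signOfBool_mul_le hn a ha hs
  have h₂ := card_filter_le_sum_signOfBool_mul_le hn (-a) (fun i => by simpa using ha i) hs
  have hcardR : (#{σ : Fin n → Bool | s ≤ |∑ i, signOfBool (σ i) * a i|} : ℝ)
      ≤ #{σ : Fin n → Bool | s ≤ ∑ i, signOfBool (σ i) * a i}
        + #{σ : Fin n → Bool | s ≤ ∑ i, signOfBool (σ i) * (-a) i} := by
    exact_mod_cast hcard
  linarith

end SignCount

section Traces

variable {X ι : Type*} [Fintype ι] (𝓕 : Set (Set X)) (point : ι → X)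

open scoped Classical in
noncomputable def traces : Finset (Finset ι) :=
  {u | ∃ F ∈ 𝓕, ∀ j, j ∈ u ↔ point j ∈ F}

lemma mem_traces {u : Finset ι} : u ∈ traces 𝓕 point ↔ ∃ F ∈ 𝓕, ∀ j, j ∈ u ↔ point j ∈ F := by
  classical
  simp [traces]

variable {𝓕 point} [DecidableEq ι]

lemma injOn_of_shatters_traces {s : Finset ι} (hs : (traces 𝓕 point).Shatters s) :
    Set.InjOn point s := by
  intro j hj j' hj' hjj'
  obtain ⟨u, hu, hsu⟩ := hs (singleton_subset_iff.2 hj)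
  obtain ⟨F, -, hF⟩ := (mem_traces 𝓕 point).1 hu
  have hju : j ∈ u := (mem_inter.1 (hsu ▸ mem_singleton_self j)).2
  have hj'u : j' ∈ s ∩ u := mem_inter.2 ⟨hj', (hF j').2 (hjj' ▸ (hF j).1 hju)⟩
  rw [hsu, mem_singleton] at hj'u
  exact hj'u.symm

lemma shatters_image_of_shatters_traces [DecidableEq X] {s : Finset ι}
    (hs : (traces 𝓕 point).Shatters s) : Shatters 𝓕 (s.image point) := by
  intro t _
  obtain ⟨u, hu, hsu⟩ := hs (filter_subset (fun j => point j ∈ t) s)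
  obtain ⟨F, hF𝓕, hF⟩ := (mem_traces 𝓕 point).1 hu
  refine ⟨F, hF𝓕, ?_⟩
  simp only [mem_image, forall_exists_index, and_imp, forall_apply_eq_imp_iff₂]
  intro j hj
  have := congrArg (j ∈ ·) hsu
  simp only [mem_inter, mem_filter, hj, true_and, hF] at this
  exact Iff.of_eq this

lemma vcDim_traces_le {k : ℕ} (hVC : ∀ s : Finset X, Shatters 𝓕 s → s.card ≤ k) :
    (traces 𝓕 point).vcDim ≤ k := by
  classical
  refine Finset.sup_le fun s hs => ?_
  have hs := mem_shatterer.1 hs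
  rw [← card_image_of_injOn (injOn_of_shatters_traces hs)]
  exact hVC _ (shatters_image_of_shatters_traces hs)

/-- Sauer–Shelah lemma, in its crude polynomial form. -/
lemma card_traces_le [Nonempty ι] {k : ℕ} (hVC : ∀ s : Finset X, Shatters 𝓕 s → s.card ≤ k) :
    #(traces 𝓕 point) ≤ (k + 1) * Fintype.card ι ^ k := by
  calc #(traces 𝓕 point)
      ≤ ∑ i ∈ Iic (traces 𝓕 point).vcDim, (Fintype.card ι).choose i :=
        (card_le_card_shatterer _).trans card_shatterer_le_sum_vcDim
    _ ≤ ∑ i ∈ Iic k, (Fintype.card ι).choose i :=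
        sum_le_sum_of_subset (Iic_subset_Iic.2 (vcDim_traces_le hVC))
    _ ≤ ∑ _i ∈ Iic k, Fintype.card ι ^ k := by
        exact sum_le_sum fun i hi => (Nat.choose_le_pow _ _).trans
          (Nat.pow_le_pow_right Fintype.card_pos (mem_Iic.1 hi))
    _ = (k + 1) * Fintype.card ι ^ k := by simp

end Traces

section Swap

variable {X : Type*} [MeasurableSpace X] {n : ℕ}

def swapIndex (σ : Fin n → Bool) : Fin n ⊕ Fin n → Fin n ⊕ Fin n
  | .inl i => if σ i then .inr i else .inl i
  | .inr i => if σ i then .inl i else .inr i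

lemma swapIndex_involutive (σ : Fin n → Bool) : Function.Involutive (swapIndex σ) := by
  rintro (i | i) <;> by_cases h : σ i <;> simp [swapIndex, h]

-- Built from measurable equivalences so that it is measure preserving for free;
-- `swapSamples_apply` gives the formula: `x i` and `y i` are exchanged whenever `σ i`.
def swapSamples (σ : Fin n → Bool) : (Fin n → X) × (Fin n → X) ≃ᵐ (Fin n → X) × (Fin n → X) :=
  (MeasurableEquiv.sumPiEquivProdPi fun _ => X).symm.trans <|
    (MeasurableEquiv.arrowCongr' (swapIndex_involutive σ).toPerm (.refl X)).trans
      (MeasurableEquiv.sumPiEquivProdPi fun _ => X)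

lemma swapSamples_apply (σ : Fin n → Bool) (p : (Fin n → X) × (Fin n → X)) :
    swapSamples σ p = (fun i => if σ i then p.2 i else p.1 i,
      fun i => if σ i then p.1 i else p.2 i) := by
  ext i <;> by_cases h : σ i <;>
    simp [swapSamples, swapIndex, h, MeasurableEquiv.sumPiEquivProdPi, Equiv.sumPiEquivProdPi,
      MeasurableEquiv.arrowCongr', Equiv.arrowCongr']

lemma measurePreserving_swapSamples (μ : Measure X) [SigmaFinite μ] (σ : Fin n → Bool) :
    MeasurePreserving (swapSamples σ)
      ((Measure.pi fun _ : Fin n => μ).prod (Measure.pi fun _ : Fin n => μ))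
      ((Measure.pi fun _ : Fin n => μ).prod (Measure.pi fun _ : Fin n => μ)) :=
  ((measurePreserving_sumPiEquivProdPi fun _ => μ).comp
    (measurePreserving_arrowCongr' _ _ _ _ fun _ => .id μ)).comp
    (measurePreserving_sumPiEquivProdPi fun _ => μ).symm

end Swap

section Deviation

variable {X : Type*} [MeasurableSpace X] (μ : Measure X) [IsProbabilityMeasure μ]

lemma measure_abs_avgMem_sub_ge_le {F : Set X} (hF : MeasurableSet F) {n : ℕ} (hn : 0 < n)
    {r : ℝ} (hr : 0 ≤ r) :
    (Measure.pi fun _ : Fin n => μ) {x | r ≤ |avgMem F x - μ.real F|}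
      ≤ ENNReal.ofReal (2 * exp (-(2 * n * r ^ 2))) := by
  have hnR : (0 : ℝ) < n := by exact_mod_cast hn
  -- the lower tail of `F` is the upper tail of `Fᶜ`
  have hcompl : ∀ a, Fᶜ.indicator (fun _ => (1 : ℝ)) a - μ.real Fᶜ
      = -(F.indicator (fun _ => (1 : ℝ)) a - μ.real F) := by
    intro a
    rw [Set.indicator_compl, probReal_compl_eq_one_sub hF]
    simp only [Pi.sub_apply]
    ring
  have hsub : {x : Fin n → X | r ≤ |avgMem F x - μ.real F|}
      ⊆ {x | n * r ≤ ∑ i, (F.indicator (fun _ => (1 : ℝ)) (x i) - μ.real F)}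
        ∪ {x | n * r ≤ ∑ i, (Fᶜ.indicator (fun _ => (1 : ℝ)) (x i) - μ.real Fᶜ)} := by
    intro x hx
    simp only [Set.mem_ofPred_eq, Set.mem_union, hcompl, sum_neg_distrib] at hx ⊢
    rw [avgMem_sub_eq_sum_div hn, abs_div, abs_of_pos hnR, le_div_iff₀ hnR, mul_comm] at hx
    exact le_abs.1 hx
  have htail : exp (-2 * (n * r) ^ 2 / n) = exp (-(2 * n * r ^ 2)) := by
    congr 1
    field_simp
  rw [← ofReal_measureReal]
  refine ENNReal.ofReal_le_ofReal ?_
  calc _ ≤ _ := measureReal_mono hsub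
    _ ≤ _ := measureReal_union_le _ _
    _ ≤ exp (-2 * (n * r) ^ 2 / n) + exp (-2 * (n * r) ^ 2 / n) :=
        add_le_add (measureReal_sum_indicator_sub_ge_le μ hF n (by positivity))
          (measureReal_sum_indicator_sub_ge_le μ hF.compl n (by positivity))
    _ = 2 * exp (-(2 * n * r ^ 2)) := by rw [htail]; ring

end Deviation

section Symmetrization

variable {X : Type*} [MeasurableSpace X] {n : ℕ}

noncomputable def supDeviation (μ : Measure X) (𝓕 : Set (Set X)) (x : Fin n → X) : ℝ :=
  ⨆ F ∈ 𝓕, |avgMem F x - μ.real F|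

noncomputable def supDiscrepancy (𝓕 : Set (Set X)) (p : (Fin n → X) × (Fin n → X)) : ℝ :=
  ⨆ F ∈ 𝓕, |avgMem F p.1 - avgMem F p.2|

lemma mul_measure_le_prod_of_le_measure_prodMk {α β : Type*} [MeasurableSpace α]
    [MeasurableSpace β] {μ : Measure α} {ν : Measure β} [SFinite ν] {B : Set α}
    {C : Set (α × β)} (hC : MeasurableSet C) {c : ℝ≥0∞}
    (h : ∀ x ∈ B, c ≤ ν (Prod.mk x ⁻¹' C)) : c * μ B ≤ μ.prod ν C := by
  rw [Measure.prod_apply hC, ← setLIntegral_const]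
  exact (setLIntegral_mono (measurable_measure_prodMk_left hC) h).trans
    (setLIntegral_le_lintegral _ _)

variable (μ : Measure X) [IsProbabilityMeasure μ] {𝓕 : Set (Set X)} {r : ℝ}

lemma inv_two_le_measure_lt_supDiscrepancy (hr : 0 ≤ r)
    (hdev : ∀ F ∈ 𝓕, (Measure.pi fun _ : Fin n => μ) {y | r < |avgMem F y - μ.real F|} ≤ 2⁻¹)
    {x : Fin n → X} (hx : 2 * r < supDeviation μ 𝓕 x) :
    2⁻¹ ≤ (Measure.pi fun _ : Fin n => μ) {y | r < supDiscrepancy 𝓕 (x, y)} := by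
  set P := Measure.pi fun _ : Fin n => μ
  obtain ⟨F, hF, hFx⟩ := exists_lt_of_lt_biSup (by positivity) hx
  set S := {y | r < |avgMem F y - μ.real F|}
  have hgood : Sᶜ ⊆ {y | r < supDiscrepancy 𝓕 (x, y)} := by
    intro y hy
    simp only [S, Set.mem_compl_iff, Set.mem_ofPred_eq, not_lt] at hy ⊢
    have hxy := le_biSup_of_forall_le (f := fun G => |avgMem G x - avgMem G y|)
      (fun G => abs_avgMem_sub_avgMem_le_one G x y) hF
    have htri := abs_sub_le (avgMem F x) (avgMem F y) (μ.real F)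
    exact (show r < |avgMem F x - avgMem F y| by linarith).trans_le hxy
  have hcover : 2⁻¹ + 2⁻¹ ≤ P S + P Sᶜ := by
    rw [ENNReal.inv_two_add_inv_two, ← measure_univ (μ := P), ← Set.union_compl_self S]
    exact measure_union_le _ _
  calc 2⁻¹ ≤ P Sᶜ := (ENNReal.add_le_add_iff_left (ENNReal.inv_ne_top.2 two_ne_zero)).1
        (hcover.trans (add_le_add_left (hdev F hF) _))
    _ ≤ _ := measure_mono hgood

lemma measure_two_mul_lt_supDeviation_le (hr : 0 ≤ r)
    (hm2 : Measurable (supDiscrepancy 𝓕 : (Fin n → X) × (Fin n → X) → ℝ))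
    (hdev : ∀ F ∈ 𝓕, (Measure.pi fun _ : Fin n => μ) {y | r < |avgMem F y - μ.real F|} ≤ 2⁻¹) :
    (Measure.pi fun _ : Fin n => μ) {x | 2 * r < supDeviation μ 𝓕 x}
      ≤ 2 * ((Measure.pi fun _ : Fin n => μ).prod (Measure.pi fun _ : Fin n => μ))
        {p | r < supDiscrepancy 𝓕 p} := by
  have h := mul_measure_le_prod_of_le_measure_prodMk (μ := Measure.pi fun _ : Fin n => μ)
    (B := {x | 2 * r < supDeviation μ 𝓕 x}) (measurableSet_lt measurable_const hm2)
    fun x hx => inv_two_le_measure_lt_supDiscrepancy μ hr hdev hx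
  calc _ = 2 * (2⁻¹ * (Measure.pi fun _ : Fin n => μ) {x | 2 * r < supDeviation μ 𝓕 x}) := by
        rw [← mul_assoc, ENNReal.mul_inv_cancel two_ne_zero ENNReal.ofNat_ne_top, one_mul]
    _ ≤ _ := by gcongr

end Symmetrization

section Counting

-- Double counting: `∑ σ, μ (T σ ⁻¹' C) = ∫⁻ z, #{σ | T σ z ∈ C} ∂μ`.
open scoped Classical in
lemma measure_le_of_card_filter_mem_le {α S : Type*} [MeasurableSpace α] [Fintype S] [Nonempty S]
    {μ : Measure α} [IsProbabilityMeasure μ] {T : S → α → α}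
    (hT : ∀ σ, MeasurePreserving (T σ) μ μ) {C : Set α} (hC : MeasurableSet C) {δ : ℝ}
    (h : ∀ z, (#{σ | T σ z ∈ C} : ℝ) ≤ Fintype.card S * δ) :
    μ C ≤ ENNReal.ofReal δ := by
  have hcount : ∀ z, ∑ σ, (T σ ⁻¹' C).indicator 1 z ≤ Fintype.card S * ENNReal.ofReal δ := by
    intro z
    simp only [Set.indicator_apply, Set.mem_preimage, Pi.one_apply, sum_boole]
    rw [← ENNReal.ofReal_natCast, ← ENNReal.ofReal_natCast, ← ENNReal.ofReal_mul (by positivity)]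
    exact ENNReal.ofReal_le_ofReal (h z)
  have hcard : (Fintype.card S : ℝ≥0∞) * μ C ≤ Fintype.card S * ENNReal.ofReal δ :=
    calc (Fintype.card S : ℝ≥0∞) * μ C = ∑ σ, μ (T σ ⁻¹' C) := by
          simp [(hT _).measure_preimage hC.nullMeasurableSet]
      _ = ∫⁻ z, ∑ σ, (T σ ⁻¹' C).indicator 1 z ∂μ := by
          rw [lintegral_finsetSum _ fun σ _ =>
            measurable_one.indicator ((hT σ).measurable hC)]
          exact sum_congr rfl fun σ _ => (lintegral_indicator_one ((hT σ).measurable hC)).symm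
      _ ≤ ∫⁻ _, Fintype.card S * ENNReal.ofReal δ ∂μ := lintegral_mono hcount
      _ = Fintype.card S * ENNReal.ofReal δ := by simp
  exact (ENNReal.mul_le_mul_iff_right (by simp) (by simp)).1 hcard

variable {X : Type*} [MeasurableSpace X] {n : ℕ}

lemma avgMem_swapSamples_sub (F : Set X) (σ : Fin n → Bool) (p : (Fin n → X) × (Fin n → X)) :
    avgMem F (swapSamples σ p).1 - avgMem F (swapSamples σ p).2
      = (∑ i, signOfBool (σ i) * (F.indicator (fun _ => (1 : ℝ)) (p.1 i)
          - F.indicator (fun _ => (1 : ℝ)) (p.2 i))) / n := by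
  rw [swapSamples_apply, avgMem, avgMem, ← sub_div, ← sum_sub_distrib]
  congr 1
  refine sum_congr rfl fun i _ => ?_
  by_cases h : σ i <;> simp [h, signOfBool]

lemma card_filter_lt_supDiscrepancy_swapSamples_le {𝓕 : Set (Set X)} {k : ℕ}
    (hVC : ∀ s : Finset X, Shatters 𝓕 s → s.card ≤ k) (hn : 0 < n) {r : ℝ} (hr : 0 ≤ r)
    (p : (Fin n → X) × (Fin n → X)) :
    (#{σ : Fin n → Bool | r < supDiscrepancy 𝓕 (swapSamples σ p)} : ℝ)
      ≤ ((k + 1) * (2 * n) ^ k : ℕ) * (2 ^ n * (2 * exp (-(n * r ^ 2 / 2)))) := by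
  classical
  have hnR : (0 : ℝ) < n := by exact_mod_cast hn
  set point : Fin n ⊕ Fin n → X := Sum.elim p.1 p.2
  -- a trace `u` of `𝓕` on the `2n` sample points determines the differences of indicators
  let a : Finset (Fin n ⊕ Fin n) → Fin n → ℝ := fun u i =>
    (if .inl i ∈ u then 1 else 0) - (if .inr i ∈ u then 1 else 0)
  have ha : ∀ u i, |a u i| ≤ 1 := by
    intro u i
    by_cases h₁ : Sum.inl i ∈ u <;> by_cases h₂ : Sum.inr i ∈ u <;> simp [a, h₁, h₂]
  have hcover : ({σ | r < supDiscrepancy 𝓕 (swapSamples σ p)} : Finset (Fin n → Bool))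
      ⊆ (traces 𝓕 point).biUnion fun u => {σ | n * r ≤ |∑ i, signOfBool (σ i) * a u i|} := by
    intro σ hσ
    obtain ⟨F, hF, hFσ⟩ := exists_lt_of_lt_biSup hr ((mem_filter_univ σ).1 hσ)
    let u : Finset (Fin n ⊕ Fin n) := {j | point j ∈ F}
    refine mem_biUnion.2 ⟨u, (mem_traces _ _).2 ⟨F, hF, by simp [u]⟩, (mem_filter_univ σ).2 ?_⟩
    rw [avgMem_swapSamples_sub, abs_div, abs_of_pos hnR, lt_div_iff₀ hnR, mul_comm] at hFσ
    have hau : ∀ i, a u i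
        = F.indicator (fun _ => (1 : ℝ)) (p.1 i) - F.indicator (fun _ => (1 : ℝ)) (p.2 i) := by
      simp [a, u, point, Set.indicator_apply]
    simpa only [hau] using hFσ.le
  have : Nonempty (Fin n) := ⟨⟨0, hn⟩⟩
  have htraces : #(traces 𝓕 point) ≤ (k + 1) * (2 * n) ^ k := by
    simpa [two_mul] using card_traces_le (point := point) hVC
  calc (#{σ : Fin n → Bool | r < supDiscrepancy 𝓕 (swapSamples σ p)} : ℝ)
      ≤ ∑ u ∈ traces 𝓕 point,
          (#{σ : Fin n → Bool | (n : ℝ) * r ≤ |∑ i, signOfBool (σ i) * a u i|} : ℝ) := by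
        exact_mod_cast (card_le_card hcover).trans card_biUnion_le
    _ ≤ #(traces 𝓕 point) * (2 ^ n * (2 * exp (-((n : ℝ) * r) ^ 2 / (2 * n)))) := by
        refine (sum_le_card_nsmul _ _ _ fun u _ =>
          card_filter_le_abs_sum_signOfBool_mul_le hn (a u) (ha u) (by positivity)).trans_eq ?_
        rw [nsmul_eq_mul]
    _ = #(traces 𝓕 point) * (2 ^ n * (2 * exp (-(n * r ^ 2 / 2)))) := by
        congr 4
        field_simp
    _ ≤ ((k + 1) * (2 * n) ^ k : ℕ) * (2 ^ n * (2 * exp (-(n * r ^ 2 / 2)))) := by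
        gcongr

variable (μ : Measure X) [IsProbabilityMeasure μ]

lemma measure_lt_supDiscrepancy_le {𝓕 : Set (Set X)} {k : ℕ}
    (hVC : ∀ s : Finset X, Shatters 𝓕 s → s.card ≤ k)
    (hm2 : Measurable (supDiscrepancy 𝓕 : (Fin n → X) × (Fin n → X) → ℝ)) (hn : 0 < n)
    {r : ℝ} (hr : 0 ≤ r) :
    ((Measure.pi fun _ : Fin n => μ).prod (Measure.pi fun _ : Fin n => μ))
        {p | r < supDiscrepancy 𝓕 p}
      ≤ ENNReal.ofReal ((k + 1) * (2 * n) ^ k * (2 * exp (-(n * r ^ 2 / 2)))) := by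
  refine measure_le_of_card_filter_mem_le (measurePreserving_swapSamples μ)
    (measurableSet_lt measurable_const hm2) fun p => ?_
  convert (card_filter_lt_supDiscrepancy_swapSamples_le hVC hn hr p).trans_eq ?_ using 3
  · simp only [Set.mem_ofPred_eq]
  · simp only [Fintype.card_fun, Fintype.card_bool, Fintype.card_fin]
    push_cast
    ring

end Counting

section SampleSize

open Filter Topology

lemma tendsto_mul_pow_mul_exp_neg_atTop (k : ℕ) {c : ℝ} (hc : 0 < c) :
    Tendsto (fun N : ℕ => ((k : ℝ) + 1) * (2 * N) ^ k * (2 * exp (-(N * c)))) atTop (𝓝 0) := by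
  have h := ((tendsto_pow_mul_exp_neg_atTop_nhds_zero k).comp
    ((tendsto_natCast_atTop_atTop (R := ℝ)).const_mul_atTop hc)).const_mul
      (((k : ℝ) + 1) * 2 * (2 / c) ^ k)
  rw [mul_zero] at h
  refine h.congr fun N => ?_
  simp only [Function.comp_apply, div_pow, mul_pow]
  field_simp

lemma exists_sampleSize (k : ℕ) {r : ℝ} (hr : 0 < r) :
    ∃ N : ℕ, 0 < N ∧ 2 * exp (-(2 * N * r ^ 2)) ≤ 2⁻¹ ∧
      ((k : ℝ) + 1) * (2 * N) ^ k * (2 * exp (-(N * r ^ 2 / 2))) < 2⁻¹ := by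
  have htendsto := tendsto_mul_pow_mul_exp_neg_atTop k (c := r ^ 2 / 2) (by positivity)
  obtain ⟨N, hδ, hN⟩ := ((htendsto.eventually (gt_mem_nhds (by norm_num : (0 : ℝ) < 2⁻¹))).and
    (eventually_gt_atTop 0)).exists
  rw [← mul_div_assoc] at hδ
  refine ⟨N, hN, ?_, hδ⟩
  have hpoly : (1 : ℝ) ≤ ((k : ℝ) + 1) * (2 * N) ^ k :=
    one_le_mul_of_one_le_of_one_le (by simp) (one_le_pow₀ (by norm_cast; omega))
  calc 2 * exp (-(2 * N * r ^ 2)) ≤ 2 * exp (-(N * r ^ 2 / 2)) := by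
        gcongr
        nlinarith [sq_nonneg r, (Nat.cast_nonneg N : (0 : ℝ) ≤ N)]
    _ ≤ ((k : ℝ) + 1) * (2 * N) ^ k * (2 * exp (-(N * r ^ 2 / 2))) :=
        le_mul_of_one_le_left (by positivity) hpoly
    _ ≤ 2⁻¹ := hδ.le

end SampleSize

/-- VC theorem / uniform law of large numbers: for every `k` and
`ε > 0` there is `N` (depending only on `k` and `ε`) such that for every probability
space `(X, μ)` and every family `𝓕` of measurable subsets of `X` of VC-dimension at
most `k` satisfying the measurability conditions (one-sample and two-sample sup maps
are measurable), there exist `x₁, …, x_N ∈ X` with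
`|Av(x₁,…,x_N; F) − μ(F)| < ε` for all `F ∈ 𝓕` simultaneously. -/
theorem stmt11 (k : ℕ) (ε : ℝ) (hε : 0 < ε) :
    ∃ N : ℕ, 0 < N ∧
      ∀ (X : Type) (mX : MeasurableSpace X) (μ : Measure X),
        IsProbabilityMeasure μ →
        ∀ 𝓕 : Set (Set X),
          (∀ F ∈ 𝓕, MeasurableSet F) →
          (∀ s : Finset X, Shatters 𝓕 s → s.card ≤ k) →
          (∀ n : ℕ, Measurable fun x : Fin n → X =>
            ⨆ F ∈ 𝓕, |avgMem F x - (μ F).toReal|) →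
          (∀ n : ℕ, Measurable fun p : (Fin n → X) × (Fin n → X) =>
            ⨆ F ∈ 𝓕, |avgMem F p.1 - avgMem F p.2|) →
          ∃ x : Fin N → X, ∀ F ∈ 𝓕, |avgMem F x - (μ F).toReal| < ε := by
  obtain ⟨N, hN, hdevN, hδN⟩ := exists_sampleSize k (by positivity : 0 < ε / 4)
  refine ⟨N, hN, fun X _ μ _ 𝓕 hmeas hVC _ hm2 => ?_⟩
  have hdev : ∀ F ∈ 𝓕, (Measure.pi fun _ : Fin N => μ) {y | ε / 4 < |avgMem F y - μ.real F|}
      ≤ 2⁻¹ := fun F hF =>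
    (measure_mono (Set.ofPred_subset_ofPred.2 fun _ => le_of_lt)).trans <|
      (measure_abs_avgMem_sub_ge_le μ (hmeas F hF) hN (by positivity)).trans <| by
        rw [← ENNReal.ofReal_ofNat 2, ← ENNReal.ofReal_inv_of_pos two_pos]
        exact ENNReal.ofReal_le_ofReal hdevN
  have hbad : (Measure.pi fun _ : Fin N => μ) {x | 2 * (ε / 4) < supDeviation μ 𝓕 x} < 1 :=
    calc _ ≤ 2 * ENNReal.ofReal ((k + 1) * (2 * N) ^ k * (2 * exp (-(N * (ε / 4) ^ 2 / 2)))) :=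
          (measure_two_mul_lt_supDeviation_le μ (by positivity) (hm2 N) hdev).trans
            (by gcongr; exact measure_lt_supDiscrepancy_le μ hVC (hm2 N) hN (by positivity))
      _ < 1 := by
          rw [← ENNReal.ofReal_ofNat 2, ← ENNReal.ofReal_mul zero_le_two, ENNReal.ofReal_lt_one]
          linarith
  obtain ⟨x, hx⟩ : ∃ x, x ∉ {x : Fin N → X | 2 * (ε / 4) < supDeviation μ 𝓕 x} := by
    by_contra! h
    simp [Set.eq_univ_of_forall h] at hbad
  refine ⟨x, fun F hF => ?_⟩
  have := le_biSup_of_forall_le (f := fun G => |avgMem G x - μ.real G|)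
    (fun G => abs_avgMem_sub_measure_le_one μ G x) hF
  simp only [Set.mem_ofPred_eq, not_lt] at hx
  exact lt_of_le_of_lt (this.trans hx) (by linarith)
end

section
/- Let S be a compact left-topological semigroup, μ an idempotent regular Borel probability measure on S (μ*μ = μ under convolution), and suppose the support of μ is contained in the right stabilizer {q : μ*q = μ}. Then the support of μ is left simple as a subsemigroup, i.e., has a unique minimal left ideal equal to itself. -/
open MeasureTheory

/-! Regularity makes the support conull, so `supp (μ.map (· * q))` lies in the closure of
`(supp μ) q`, a compact and hence closed set. When `μ.map (· * q) = μ`, this puts `supp μ` inside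
`(supp μ) q`, which lies in every left ideal of `supp μ` containing `q`. -/

namespace MeasureTheory.Measure

lemma support_map_subset_closure_image {X Y : Type*} [TopologicalSpace X] [MeasurableSpace X]
    [TopologicalSpace Y] [MeasurableSpace Y] [OpensMeasurableSpace Y] {μ : Measure X}
    (hμ : μ.support ∈ ae μ) {f : X → Y} (hf : Measurable f) :
    (μ.map f).support ⊆ closure (f '' μ.support) := by
  refine support_subset_of_isClosed isClosed_closure ?_
  rw [mem_ae_map_iff hf.aemeasurable isClosed_closure.measurableSet]
  exact Filter.mem_of_superset hμ fun x hx => subset_closure (Set.mem_image_of_mem f hx)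

lemma support_map_subset_image {X Y : Type*} [TopologicalSpace X] [CompactSpace X]
    [MeasurableSpace X] [OpensMeasurableSpace X] [TopologicalSpace Y] [T2Space Y]
    [MeasurableSpace Y] [BorelSpace Y]
    (μ : Measure X) [μ.Regular] {f : X → Y} (hf : Continuous f) :
    (μ.map f).support ⊆ f '' μ.support := by
  have hclosed : IsClosed (f '' μ.support) :=
    (isClosed_support.isCompact.image hf).isClosed
  simpa only [hclosed.closure_eq] using
    support_map_subset_closure_image (support_mem_ae_of_regular (μ := μ)) hf.measurable

end MeasureTheory.Measure

lemma IsLeftIdealIn.eq_of_subset_image_mul_right {M : Type*} [Mul M] {T J : Set M}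
    (hT : ∀ q ∈ T, T ⊆ (· * q) '' T) (hJ : IsLeftIdealIn T J) : J = T := by
  obtain ⟨⟨j, hj⟩, hJT, hmul⟩ := hJ
  refine hJT.antisymm fun t ht => ?_
  obtain ⟨p, hp, rfl⟩ := hT j (hJT hj) ht
  exact hmul p hp j hj

theorem stmt12_general {S : Type*} [Semigroup S] [TopologicalSpace S] [CompactSpace S] [T2Space S]
    [MeasurableSpace S] [BorelSpace S]
    (hc : ∀ a : S, Continuous fun x : S => x * a)
    (μ : Measure S) [μ.Regular]
    (supp : Set S)
    (hsupp : supp = {x : S | ∀ U : Set S, IsOpen U → x ∈ U → 0 < μ U})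
    (hstab : ∀ q ∈ supp, μ.map (fun p : S => p * q) = μ) :
    ∀ J : Set S, IsLeftIdealIn supp J → J = supp := by
  have hsupp_eq : supp = μ.support := by
    simp only [hsupp, Measure.support_eq_forall_isOpen, imp.swap]
  intro J hJ
  refine hJ.eq_of_subset_image_mul_right fun q hq => ?_
  have hcover := Measure.support_map_subset_image μ (hc q)
  rwa [hstab q hq, ← hsupp_eq] at hcover

/-- Let `S` be a compact left-topological semigroup, `μ` an idempotent
regular Borel probability measure on `S` (idempotent for convolution: for all
continuous `f`, `μ(f) = ∫∫ f(p·q) dμ(p) dμ(q)`), and suppose the support of `μ` is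
contained in the right stabilizer `{q : μ * δ_q = μ}`. Then the support of `μ` is
left simple as a subsemigroup: its unique minimal left ideal is itself (every left
ideal of it equals it). -/
theorem stmt12 {S : Type*} [Semigroup S] [TopologicalSpace S] [CompactSpace S] [T2Space S]
    [MeasurableSpace S] [BorelSpace S]
    (hc : ∀ a : S, Continuous fun x : S => x * a)
    (μ : Measure S) [IsProbabilityMeasure μ] [μ.Regular]
    (hidem : ∀ f : C(S, ℝ), ∫ x, f x ∂μ = ∫ p, ∫ q, f (p * q) ∂μ ∂μ)
    (supp : Set S)
    (hsupp : supp = {x : S | ∀ U : Set S, IsOpen U → x ∈ U → 0 < μ U})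
    (hstab : ∀ q ∈ supp, μ.map (fun p : S => p * q) = μ) :
    ∀ J : Set S, IsLeftIdealIn supp J → J = supp :=
  stmt12_general hc μ supp hsupp hstab
end

section
/- Let S be a compact Hausdorff left-topological semigroup which is left simple, let G be a compact group, and ρ : S → G a surjective homomorphism whose kernel J (preimage of the identity) consists of idempotents and which is injective on each maximal subgroup. Then S is isomorphic as a semigroup to G × J, where J is a semigroup of idempotents. -/
/-!
In a left simple semigroup every idempotent `f` is a right identity (write `s = t * f`), and
every `s` has exactly one idempotent left identity `e s`: if `t * s = j` with `j` idempotent, then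
`s * t` is idempotent with `s * t * s = s`, and it equals every idempotent left identity of `s`.
The set `{x | e * x = x}` is then the maximal subgroup at the idempotent `e`, so `ρ` separates
elements with the same `e s`, while `j * x` realises any pair `(ρ x, j)` with `j ∈ ρ⁻¹ 1`.
Hence `s ↦ (ρ s, e s)` is a bijection, and it is multiplicative because `e (s * t) = e s`
and `e s * e t = e s`.
-/

section LeftSimple

variable {S : Type*} [Semigroup S]

theorem mul_eq_self_of_isIdempotentElem (hls : ∀ s a : S, ∃ t, t * s = a)
    {f : S} (hf : IsIdempotentElem f) (s : S) : s * f = s := by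
  obtain ⟨t, rfl⟩ := hls f s
  rw [mul_assoc, hf.eq]

theorem isIdempotentElem_mul_of_mul_eq (hls : ∀ s a : S, ∃ t, t * s = a)
    {j s t : S} (hj : IsIdempotentElem j) (hts : t * s = j) : IsIdempotentElem (s * t) := by
  change s * t * (s * t) = s * t
  rw [mul_assoc, ← mul_assoc t, hts, ← mul_assoc, mul_eq_self_of_isIdempotentElem hls hj]

theorem mul_eq_of_mul_eq (hls : ∀ s a : S, ∃ t, t * s = a)
    {j s t : S} (hj : IsIdempotentElem j) (hjs : j * s = s) (hts : t * s = j) : s * t = j :=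
  calc s * t = j * (s * t) := by rw [← mul_assoc, hjs]
    _ = j := mul_eq_self_of_isIdempotentElem hls (isIdempotentElem_mul_of_mul_eq hls hj hts) j

theorem exists_isIdempotentElem_mul_eq_self (hls : ∀ s a : S, ∃ t, t * s = a)
    {j : S} (hj : IsIdempotentElem j) (s : S) : ∃ f : S, IsIdempotentElem f ∧ f * s = s := by
  obtain ⟨t, hts⟩ := hls s j
  refine ⟨s * t, isIdempotentElem_mul_of_mul_eq hls hj hts, ?_⟩
  rw [mul_assoc, hts, mul_eq_self_of_isIdempotentElem hls hj]

theorem eq_of_isIdempotentElem_of_mul_eq_self (hls : ∀ s a : S, ∃ t, t * s = a)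
    {j j' s : S} (hj' : IsIdempotentElem j') (hjs : j * s = s) (hj's : j' * s = s) : j = j' := by
  obtain ⟨t, hts⟩ := hls s j'
  calc j = j * j' := (mul_eq_self_of_isIdempotentElem hls hj' j).symm
    _ = j' := by rw [← mul_eq_of_mul_eq hls hj' hj's hts, ← mul_assoc, hjs]

theorem isMaxSubgroupIn_setOf_mul_eq_self (hls : ∀ s a : S, ∃ t, t * s = a)
    {j : S} (hj : IsIdempotentElem j) : IsMaxSubgroupIn Set.univ {x : S | j * x = x} := by
  refine ⟨⟨Set.subset_univ _, ⟨j, hj.eq⟩, ?_, j, hj.eq, ?_, ?_⟩, ?_⟩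
  · intro a ha b _
    change j * (a * b) = a * b
    rw [← mul_assoc, ha]
  · exact fun g hg => ⟨hg, mul_eq_self_of_isIdempotentElem hls hj g⟩
  · intro g hg
    obtain ⟨t, htg⟩ := hls g j
    have hjtg : j * t * g = j := by rw [mul_assoc, htg, hj.eq]
    refine ⟨j * t, by rw [Set.mem_ofPred_eq, ← mul_assoc, hj.eq], ?_, hjtg⟩
    rw [← mul_assoc, mul_eq_self_of_isIdempotentElem hls hj, mul_eq_of_mul_eq hls hj hg htg]
  · rintro H ⟨-, -, -, e, -, he, -⟩ hjH
    have hej : e = j := (mul_eq_self_of_isIdempotentElem hls hj e).symm.trans (he j (hjH hj.eq)).1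
    refine Set.Subset.antisymm (fun g hg => ?_) hjH
    rw [Set.mem_ofPred_eq, ← hej]
    exact (he g hg).1

end LeftSimple

theorem bijective_prod_of_isIdempotentElem_mul_eq_self {S G : Type*} [Semigroup S] [Group G]
    (hls : ∀ s a : S, ∃ t, t * s = a) {ρ : S → G} (hρs : Function.Surjective ρ)
    (hρm : ∀ a b : S, ρ (a * b) = ρ a * ρ b)
    (hker : ∀ j ∈ ρ ⁻¹' ({1} : Set G), j * j = j)
    (hinj : ∀ H : Set S, IsMaxSubgroupIn Set.univ H → Set.InjOn ρ H) {e : S → S}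
    (he : ∀ s, IsIdempotentElem (e s) ∧ e s * s = s) (he₁ : ∀ s, ρ (e s) = 1) :
    Function.Bijective fun s => (ρ s, (⟨e s, he₁ s⟩ : ρ ⁻¹' ({1} : Set G))) := by
  refine ⟨fun s t hst => ?_, fun ⟨g, j, hj⟩ => ?_⟩
  · obtain ⟨hρst, hest⟩ := Prod.mk.inj hst
    replace hest : e s = e t := congrArg Subtype.val hest
    exact hinj _ (isMaxSubgroupIn_setOf_mul_eq_self hls (he s).1) (he s).2
      (by rw [Set.mem_ofPred_eq, hest, (he t).2]) hρst
  · have hj₁ : ρ j = 1 := hj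
    obtain ⟨x, rfl⟩ := hρs g
    have hρjx : ρ (j * x) = ρ x := by rw [hρm, hj₁, one_mul]
    refine ⟨j * x, Prod.ext hρjx (Subtype.ext ?_)⟩
    exact eq_of_isIdempotentElem_of_mul_eq_self hls (hker j hj) (he _).2
      (by rw [← mul_assoc, hker j hj])

theorem stmt14_general {S G : Type*} [Semigroup S] [Group G]
    (hls : ∀ s : S, Set.range (fun x : S => x * s) = Set.univ)
    (ρ : S → G) (hρs : Function.Surjective ρ)
    (hρm : ∀ a b : S, ρ (a * b) = ρ a * ρ b)
    (hker : ∀ j ∈ ρ ⁻¹' ({1} : Set G), j * j = j)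
    (hinj : ∀ H : Set S, IsMaxSubgroupIn Set.univ H → Set.InjOn ρ H) :
    (∀ j ∈ ρ ⁻¹' ({1} : Set G), ∀ j' ∈ ρ ⁻¹' ({1} : Set G), j * j' ∈ ρ ⁻¹' ({1} : Set G)) ∧
      ∃ φ : S ≃ G × (ρ ⁻¹' ({1} : Set G) : Set S), ∀ s t : S,
        (φ (s * t)).1 = (φ s).1 * (φ t).1 ∧
        ((φ (s * t)).2 : S) = ((φ s).2 : S) * ((φ t).2 : S) := by
  have hls' : ∀ s a : S, ∃ t, t * s = a := fun s => Set.range_eq_univ.mp (hls s)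
  obtain ⟨j₀, hj₀⟩ := hρs 1
  choose e he using exists_isIdempotentElem_mul_eq_self hls' (hker j₀ hj₀)
  have he₁ (s : S) : ρ (e s) = 1 :=
    IsIdempotentElem.iff_eq_one.mp (by rw [IsIdempotentElem, ← hρm, (he s).1.eq])
  have he_mul (s t : S) : e (s * t) = e s :=
    eq_of_isIdempotentElem_of_mul_eq_self hls' (he s).1 (he (s * t)).2
      (by rw [← mul_assoc, (he s).2])
  have hφ := bijective_prod_of_isIdempotentElem_mul_eq_self hls' hρs hρm hker hinj he he₁
  refine ⟨fun j (hj : ρ j = 1) j' (hj' : ρ j' = 1) =>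
      show ρ (j * j') = 1 by rw [hρm, hj, hj', one_mul],
    Equiv.ofBijective _ hφ,
    fun s t => ⟨hρm s t, ?_⟩⟩
  change e (s * t) = e s * e t
  rw [he_mul, mul_eq_self_of_isIdempotentElem hls' (he t).1]

/-- Let `S` be a compact Hausdorff left-topological semigroup which is
left simple (`S·s = S` for all `s`), `G` a compact group, and `ρ : S → G` a surjective
semigroup homomorphism whose kernel `J = ρ⁻¹(1)` consists of idempotents and which is
injective on each maximal subgroup. Then `J` is a subsemigroup of idempotents (a band),
and `S` is isomorphic as a semigroup to `G × J` (with coordinatewise multiplication,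
the `J`-coordinate multiplying via the semigroup operation of `S`). -/
theorem stmt14 {S G : Type*} [Semigroup S] [TopologicalSpace S] [CompactSpace S] [T2Space S]
    [Group G] [TopologicalSpace G] [IsTopologicalGroup G] [CompactSpace G] [T2Space G]
    (hc : ∀ a : S, Continuous fun x : S => x * a)
    (hls : ∀ s : S, Set.range (fun x : S => x * s) = Set.univ)
    (ρ : S → G) (hρs : Function.Surjective ρ)
    (hρm : ∀ a b : S, ρ (a * b) = ρ a * ρ b)
    (hker : ∀ j ∈ ρ ⁻¹' ({1} : Set G), j * j = j)
    (hinj : ∀ H : Set S, IsMaxSubgroupIn Set.univ H → Set.InjOn ρ H) :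
    (∀ j ∈ ρ ⁻¹' ({1} : Set G), ∀ j' ∈ ρ ⁻¹' ({1} : Set G), j * j' ∈ ρ ⁻¹' ({1} : Set G)) ∧
      ∃ φ : S ≃ G × (ρ ⁻¹' ({1} : Set G) : Set S), ∀ s t : S,
        (φ (s * t)).1 = (φ s).1 * (φ t).1 ∧
        ((φ (s * t)).2 : S) = ((φ s).2 : S) * ((φ t).2 : S) :=
  stmt14_general hls ρ hρs hρm hker hinj
end
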